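/- arXiv:1605.02065 — 8 statements merged into one kernel-verified Lean document; each statement's English description precedes it below -/
import Mathlib

section
/- For all real numbers x, y with 0 ≤ y < x ≤ 2, one has (sinh(x) − sinh(y)) / sinh(x − y) ≤ exp(xy/2). -/
/-!
With `a = (x + y) / 2` and `b = (x - y) / 2` the ratio is `cosh a / cosh b` and `x * y / 2 = (a² - b²) / 2`,
so the claim says that `t ↦ exp (-t² / 2) * cosh t` does not increase from `b` to `a`. Its derivative is
`exp (-t² / 2) * (sinh t - t * cosh t)`, which is nonpositive for `t ≥ 0` because `tanh t ≤ t`.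
-/

open Real Set

namespace Real

lemma sinh_le_mul_cosh {t : ℝ} (ht : 0 ≤ t) : sinh t ≤ t * cosh t := by
  have hderiv (s : ℝ) : HasDerivAt (fun s ↦ s * cosh s - sinh s) (s * sinh s) s :=
    (((hasDerivAt_id' s).fun_mul (hasDerivAt_cosh s)).fun_sub (hasDerivAt_sinh s)).congr_deriv
      (by ring)
  have hmono : MonotoneOn (fun s ↦ s * cosh s - sinh s) (Ici 0) := by
    refine monotoneOn_of_hasDerivWithinAt_nonneg (convex_Ici 0) (by fun_prop)
      (fun s _ ↦ (hderiv s).hasDerivWithinAt) fun s hs ↦ ?_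
    rw [interior_Ici, mem_Ioi] at hs
    exact mul_nonneg hs.le (sinh_nonneg_iff.2 hs.le)
  simpa using hmono self_mem_Ici ht ht

lemma antitoneOn_exp_neg_sq_half_mul_cosh :
    AntitoneOn (fun t ↦ exp (-(t ^ 2 / 2)) * cosh t) (Ici 0) := by
  have hderiv (s : ℝ) : HasDerivAt (fun t ↦ exp (-(t ^ 2 / 2)) * cosh t)
      (exp (-(s ^ 2 / 2)) * (sinh s - s * cosh s)) s :=
    ((((hasDerivAt_pow 2 s).div_const 2).fun_neg.exp).fun_mul (hasDerivAt_cosh s)).congr_deriv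
      (by push_cast; ring)
  refine antitoneOn_of_hasDerivWithinAt_nonpos (convex_Ici 0) (by fun_prop)
    (fun s _ ↦ (hderiv s).hasDerivWithinAt) fun s hs ↦ ?_
  rw [interior_Ici, mem_Ioi] at hs
  exact mul_nonpos_of_nonneg_of_nonpos (exp_pos _).le (sub_nonpos.2 (sinh_le_mul_cosh hs.le))

lemma cosh_le_exp_mul_cosh {a b : ℝ} (hb : 0 ≤ b) (hba : b ≤ a) :
    cosh a ≤ exp ((a ^ 2 - b ^ 2) / 2) * cosh b := by
  have h := antitoneOn_exp_neg_sq_half_mul_cosh hb (hb.trans hba) hba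
  calc cosh a = exp (a ^ 2 / 2) * (exp (-(a ^ 2 / 2)) * cosh a) := by
        rw [← mul_assoc, ← exp_add, add_neg_cancel, exp_zero, one_mul]
    _ ≤ exp (a ^ 2 / 2) * (exp (-(b ^ 2 / 2)) * cosh b) := by gcongr
    _ = exp ((a ^ 2 - b ^ 2) / 2) * cosh b := by rw [← mul_assoc, ← exp_add]; ring_nf

lemma sinh_sub_sinh_div_sinh_sub {x y : ℝ} (hxy : x ≠ y) :
    (sinh x - sinh y) / sinh (x - y) = cosh ((x + y) / 2) / cosh ((x - y) / 2) := by
  obtain ⟨a, b, rfl, rfl⟩ : ∃ a b, x = a + b ∧ y = a - b := ⟨(x + y) / 2, (x - y) / 2, by ring, by ring⟩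
  have hb : sinh b ≠ 0 := sinh_ne_zero.2 (by rintro rfl; simp at hxy)
  rw [show a + b + (a - b) = 2 * a by ring, show a + b - (a - b) = 2 * b by ring,
    mul_div_cancel_left₀ _ two_ne_zero, mul_div_cancel_left₀ _ two_ne_zero,
    sinh_add, sinh_sub, sinh_two_mul]
  field_simp
  ring

end Real

theorem sinh_ratio_le_exp_general (x y : ℝ) (hy : 0 ≤ y) (hyx : y < x) :
    (Real.sinh x - Real.sinh y) / Real.sinh (x - y) ≤ Real.exp (x * y / 2) := by
  rw [Real.sinh_sub_sinh_div_sinh_sub hyx.ne', div_le_iff₀ (Real.cosh_pos _)]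
  rw [show x * y / 2 = (((x + y) / 2) ^ 2 - ((x - y) / 2) ^ 2) / 2 by ring]
  exact Real.cosh_le_exp_mul_cosh (by linarith) (by linarith)

theorem sinh_ratio_le_exp (x y : ℝ) (hy : 0 ≤ y) (hyx : y < x) (hx : x ≤ 2) :
    (Real.sinh x - Real.sinh y) / Real.sinh (x - y) ≤ Real.exp (x * y / 2) :=
  sinh_ratio_le_exp_general x y hy hyx
end

section
/- For all real numbers x, y with 0 ≤ y < x ≤ 2, one has tanh(x/2) · tanh(y/2) ≤ tanh(xy/4). -/
/-! `tanh` is concave on `[0, ∞)` and vanishes at `0`, so `l * tanh t ≤ tanh (l * t)` for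
`0 ≤ l ≤ 1` and `t ≥ 0`. Taking `l = tanh (y / 2)` and `t = x / 2`, and then using
`tanh (y / 2) ≤ y / 2` together with the monotonicity of `tanh`, gives the claim. -/

open Set

theorem ConcaveOn.mul_le_map_smul {E : Type*} [AddCommGroup E] [Module ℝ E] {s : Set E}
    {f : E → ℝ} (hf : ConcaveOn ℝ s f) (h0 : (0 : E) ∈ s) (hf0 : 0 ≤ f 0) {x : E} (hx : x ∈ s)
    {a : ℝ} (ha₀ : 0 ≤ a) (ha₁ : a ≤ 1) : a * f x ≤ f (a • x) := by
  have h := hf.2 hx h0 ha₀ (sub_nonneg.2 ha₁) (add_sub_cancel a 1)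
  simp only [smul_zero, add_zero, smul_eq_mul] at h
  linarith [mul_nonneg (sub_nonneg.2 ha₁) hf0]

namespace Real

theorem hasDerivAt_tanh (x : ℝ) : HasDerivAt tanh (1 / cosh x ^ 2) x := by
  have h := (hasDerivAt_sinh x).div (hasDerivAt_cosh x) (cosh_pos x).ne'
  rw [show tanh = sinh / cosh from funext tanh_eq_sinh_div_cosh]
  refine h.congr_deriv ?_
  rw [← sq, ← sq, cosh_sq_sub_sinh_sq]

theorem deriv_tanh : deriv tanh = fun x => 1 / cosh x ^ 2 :=
  funext fun x => (hasDerivAt_tanh x).deriv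

theorem differentiable_tanh : Differentiable ℝ tanh :=
  fun x => (hasDerivAt_tanh x).differentiableAt

theorem tanh_strictMono : StrictMono tanh :=
  strictMono_of_deriv_pos fun x => by rw [deriv_tanh]; positivity

theorem tanh_nonneg {x : ℝ} (hx : 0 ≤ x) : 0 ≤ tanh x :=
  tanh_zero ▸ tanh_strictMono.monotone hx

theorem concaveOn_tanh : ConcaveOn ℝ (Ici 0) tanh := by
  refine AntitoneOn.concaveOn_of_deriv (convex_Ici 0) differentiable_tanh.continuous.continuousOn
    differentiable_tanh.differentiableOn ?_
  rw [interior_Ici, deriv_tanh]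
  intro s hs t ht hst
  have hcosh : cosh s ≤ cosh t := by
    rw [cosh_le_cosh, abs_of_pos hs, abs_of_pos ht]
    exact hst
  have := cosh_pos s
  dsimp only
  gcongr

theorem tanh_le_self {x : ℝ} (hx : 0 ≤ x) : tanh x ≤ x := by
  rcases hx.eq_or_lt with rfl | hx
  · rw [tanh_zero]
  have h := concaveOn_tanh.slope_le_of_hasDerivAt self_mem_Ici hx.le hx (hasDerivAt_tanh 0)
  rw [slope_def_field, tanh_zero, cosh_zero, sub_zero, sub_zero, div_le_iff₀ hx] at h
  simpa using h

end Real

open Real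

theorem tanh_prod_le_tanh_general (x y : ℝ) (hy : 0 ≤ y) (hyx : y < x) :
    Real.tanh (x / 2) * Real.tanh (y / 2) ≤ Real.tanh (x * y / 4) := by
  have hx : 0 ≤ x / 2 := by linarith
  have hy' : 0 ≤ y / 2 := by linarith
  calc tanh (x / 2) * tanh (y / 2) = tanh (y / 2) * tanh (x / 2) := mul_comm _ _
    _ ≤ tanh (tanh (y / 2) * (x / 2)) :=
      concaveOn_tanh.mul_le_map_smul self_mem_Ici tanh_zero.ge hx (tanh_nonneg hy')
        (tanh_lt_one _).le
    _ ≤ tanh (y / 2 * (x / 2)) :=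
      tanh_strictMono.monotone (mul_le_mul_of_nonneg_right (tanh_le_self hy') hx)
    _ = tanh (x * y / 4) := by ring_nf

theorem tanh_prod_le_tanh (x y : ℝ) (hy : 0 ≤ y) (hyx : y < x) (hx : x ≤ 2) :
    Real.tanh (x / 2) * Real.tanh (y / 2) ≤ Real.tanh (x * y / 4) :=
  tanh_prod_le_tanh_general x y hy hyx
end

section
/- Let P, Q, R be probability distributions on a finite set Ω with all probabilities positive. Then for all real k > 1 and α > 1: D_α(P‖Q) ≤ (kα/(kα−1)) · D_{(kα−1)/(k−1)}(P‖R) + D_{kα}(R‖Q), where D_β(A‖B) = (1/(β−1)) log ( Σ_x A(x)^β B(x)^{1−β} ). -/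
/-!
Write `P^α Q^(1-α) = (P^α R^(1/p-α)) · (R^(α-1/p) Q^(1-α))` and apply Hölder's inequality with
conjugate exponents `p, q`: the two factors raised to the powers `p` and `q` are the summands of the
Rényi sums of order `αp` for `(P, R)` and of order `(α-1)q+1` for `(R, Q)`. Taking logarithms and
dividing by `α - 1` gives the inequality for arbitrary conjugate `p, q`; the choice
`q = (kα-1)/(α-1)` makes the orders `(kα-1)/(k-1)` and `kα`.
-/

open Real

namespace Renyi

variable {Ω : Type*} [Fintype Ω]

noncomputable def renyiSum (β : ℝ) (A B : Ω → ℝ) : ℝ := ∑ x, A x ^ β * B x ^ (1 - β)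

noncomputable def renyiDiv (β : ℝ) (A B : Ω → ℝ) : ℝ := 1 / (β - 1) * log (renyiSum β A B)

theorem renyiSum_pos [Nonempty Ω] {A B : Ω → ℝ} (hA : ∀ x, 0 < A x) (hB : ∀ x, 0 < B x)
    (β : ℝ) : 0 < renyiSum β A B :=
  Finset.sum_pos (fun x _ ↦ mul_pos (rpow_pos_of_pos (hA x) _) (rpow_pos_of_pos (hB x) _))
    Finset.univ_nonempty

theorem renyiSum_le_of_holderConjugate {P Q R : Ω → ℝ} (hP : ∀ x, 0 < P x)
    (hQ : ∀ x, 0 < Q x) (hR : ∀ x, 0 < R x) {p q : ℝ} (hpq : p.HolderConjugate q) (α : ℝ) :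
    renyiSum α P Q ≤
      renyiSum (α * p) P R ^ (1 / p) * renyiSum ((α - 1) * q + 1) R Q ^ (1 / q) := by
  have hqp : q / p = q - 1 := by
    have := hpq.inv_add_inv_eq_one
    field_simp [hpq.ne_zero, hpq.symm.ne_zero] at this ⊢
    linarith
  have hprod : ∀ x, P x ^ α * R x ^ (1 / p - α) * (R x ^ (α - 1 / p) * Q x ^ (1 - α)) =
      P x ^ α * Q x ^ (1 - α) := fun x ↦ by
    rw [mul_assoc, ← mul_assoc (R x ^ _), ← rpow_add (hR x)]
    simp
  have hpow : ∀ {a b : ℝ} (ha : 0 < a) (hb : 0 < b) (s t r : ℝ),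
      (a ^ s * b ^ t) ^ r = a ^ (s * r) * b ^ (t * r) := fun ha hb s t r ↦ by
    rw [mul_rpow (rpow_nonneg ha.le _) (rpow_nonneg hb.le _), ← rpow_mul ha.le, ← rpow_mul hb.le]
  have hfirst : ∀ x, (P x ^ α * R x ^ (1 / p - α)) ^ p = P x ^ (α * p) * R x ^ (1 - α * p) :=
    fun x ↦ by
      rw [hpow (hP x) (hR x)]
      congr 2
      field_simp [hpq.ne_zero]
  have hsecond : ∀ x, (R x ^ (α - 1 / p) * Q x ^ (1 - α)) ^ q =
      R x ^ ((α - 1) * q + 1) * Q x ^ (1 - ((α - 1) * q + 1)) := fun x ↦ by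
    rw [hpow (hR x) (hQ x)]
    congr 2
    · rw [sub_mul, one_div_mul_eq_div, hqp]; ring
    · ring
  have holder := inner_le_Lp_mul_Lq_of_nonneg Finset.univ hpq
    (f := fun x ↦ P x ^ α * R x ^ (1 / p - α)) (g := fun x ↦ R x ^ (α - 1 / p) * Q x ^ (1 - α))
    (fun x _ ↦ by have := hP x; have := hR x; positivity)
    (fun x _ ↦ by have := hR x; have := hQ x; positivity)
  simpa only [renyiSum, hprod, hfirst, hsecond] using holder

theorem log_renyiSum_le_of_holderConjugate {P Q R : Ω → ℝ} (hP : ∀ x, 0 < P x)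
    (hQ : ∀ x, 0 < Q x) (hR : ∀ x, 0 < R x) {p q : ℝ} (hpq : p.HolderConjugate q) (α : ℝ) :
    log (renyiSum α P Q) ≤
      1 / p * log (renyiSum (α * p) P R) + 1 / q * log (renyiSum ((α - 1) * q + 1) R Q) := by
  rcases isEmpty_or_nonempty Ω with hΩ | hΩ
  · simp [renyiSum]
  have hA := renyiSum_pos hP hR (α * p)
  have hB := renyiSum_pos hR hQ ((α - 1) * q + 1)
  calc log (renyiSum α P Q)
      ≤ log (renyiSum (α * p) P R ^ (1 / p) * renyiSum ((α - 1) * q + 1) R Q ^ (1 / q)) :=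
        log_le_log (renyiSum_pos hP hQ α) (renyiSum_le_of_holderConjugate hP hQ hR hpq α)
    _ = _ := by rw [log_mul (by positivity) (by positivity), log_rpow hA, log_rpow hB]

theorem renyiDiv_le_of_holderConjugate {P Q R : Ω → ℝ} (hP : ∀ x, 0 < P x)
    (hQ : ∀ x, 0 < Q x) (hR : ∀ x, 0 < R x) {p q : ℝ} (hpq : p.HolderConjugate q) {α : ℝ}
    (hα : 1 < α) :
    renyiDiv α P Q ≤
      (α * p - 1) / (p * (α - 1)) * renyiDiv (α * p) P R + renyiDiv ((α - 1) * q + 1) R Q := by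
  have hα₀ : 0 < α - 1 := by linarith
  have hαp : α * p - 1 ≠ 0 := by nlinarith [hpq.lt]
  have hq := hpq.symm.ne_zero
  calc renyiDiv α P Q
      ≤ 1 / (α - 1) * (1 / p * log (renyiSum (α * p) P R) +
          1 / q * log (renyiSum ((α - 1) * q + 1) R Q)) :=
        mul_le_mul_of_nonneg_left (log_renyiSum_le_of_holderConjugate hP hQ hR hpq α)
          (by positivity)
    _ = _ := by
      unfold renyiDiv
      field_simp [hpq.ne_zero]
      ring

end Renyi

open Renyi in
theorem renyi_triangle_like_general {Ω : Type*} [Fintype Ω] (P Q R : Ω → ℝ)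
    (hP : ∀ x, 0 < P x) (hQ : ∀ x, 0 < Q x) (hR : ∀ x, 0 < R x)
    (k α : ℝ) (hk : 1 < k) (hα : 1 < α) :
    (1 / (α - 1)) * Real.log (∑ x, P x ^ α * Q x ^ (1 - α)) ≤
      (k * α / (k * α - 1)) *
        ((1 / ((k * α - 1) / (k - 1) - 1)) *
          Real.log (∑ x, P x ^ ((k * α - 1) / (k - 1)) * R x ^ (1 - (k * α - 1) / (k - 1)))) +
      (1 / (k * α - 1)) * Real.log (∑ x, R x ^ (k * α) * Q x ^ (1 - k * α)) := by
  have hα₀ : 0 < α - 1 := by linarith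
  have hk₀ : 0 < k - 1 := by linarith
  have hkα : 0 < k * α - 1 := by nlinarith
  have hpq : ((k * α - 1) / (α * (k - 1))).HolderConjugate ((k * α - 1) / (α - 1)) := by
    refine holderConjugate_iff.mpr ⟨?_, ?_⟩
    · rw [lt_div_iff₀ (by positivity)]
      nlinarith
    · field_simp
      ring
  have h := renyiDiv_le_of_holderConjugate hP hQ hR hpq hα
  have hcoef : (α * ((k * α - 1) / (α * (k - 1))) - 1) /
      ((k * α - 1) / (α * (k - 1)) * (α - 1)) = k * α / (k * α - 1) := by
    field_simp
    ring
  have hβ : α * ((k * α - 1) / (α * (k - 1))) = (k * α - 1) / (k - 1) := by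
    field_simp
  have hγ : (α - 1) * ((k * α - 1) / (α - 1)) + 1 = k * α := by
    field_simp
    ring
  rwa [hcoef, hβ, hγ] at h

theorem renyi_triangle_like {Ω : Type*} [Fintype Ω] (P Q R : Ω → ℝ)
    (hP : ∀ x, 0 < P x) (hQ : ∀ x, 0 < Q x) (hR : ∀ x, 0 < R x)
    (hPsum : ∑ x, P x = 1) (hQsum : ∑ x, Q x = 1) (hRsum : ∑ x, R x = 1)
    (k α : ℝ) (hk : 1 < k) (hα : 1 < α) :
    (1 / (α - 1)) * Real.log (∑ x, P x ^ α * Q x ^ (1 - α)) ≤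
      (k * α / (k * α - 1)) *
        ((1 / ((k * α - 1) / (k - 1) - 1)) *
          Real.log (∑ x, P x ^ ((k * α - 1) / (k - 1)) * R x ^ (1 - (k * α - 1) / (k - 1)))) +
      (1 / (k * α - 1)) * Real.log (∑ x, R x ^ (k * α) * Q x ^ (1 - k * α)) :=
  renyi_triangle_like_general P Q R hP hQ hR k α hk hα
end

section
/- Let P and Q be probability distributions on a finite set Ω with all probabilities positive, and let ξ, ρ ≥ 0 satisfy D_α(P‖Q) ≤ ξ + ρα for all α ∈ (1, ∞). Then for every ε > ξ + ρ and every measurable event S ⊆ Ω, P(S) ≤ e^ε Q(S) + e^{−(ε−ξ−ρ)²/(4ρ)} (assuming ρ > 0). -/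
theorem zcdp_to_approx_dp {Ω : Type*} [Fintype Ω] (P Q : Ω → ℝ)
    (hP : ∀ x, 0 < P x) (hQ : ∀ x, 0 < Q x)
    (hPsum : ∑ x, P x = 1) (hQsum : ∑ x, Q x = 1)
    (ξ ρ : ℝ) (hξ : 0 ≤ ξ) (hρ : 0 < ρ)
    (hD : ∀ α : ℝ, 1 < α →
      (1 / (α - 1)) * Real.log (∑ x, P x ^ α * Q x ^ (1 - α)) ≤ ξ + ρ * α)
    (ε : ℝ) (hε : ξ + ρ < ε) (S : Finset Ω) :
    ∑ x ∈ S, P x ≤ Real.exp ε * ∑ x ∈ S, Q x + Real.exp (-(ε - ξ - ρ) ^ 2 / (4 * ρ)) := by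
  rcases isEmpty_or_nonempty Ω with hΩ | hΩ
  · have hS : S = ∅ := Finset.eq_empty_of_isEmpty S
    subst hS
    simp
    positivity
  set α := (ε - ξ + ρ) / (2 * ρ) with hα_def
  have h2ρ : (0:ℝ) < 2 * ρ := by linarith
  have hα1 : 1 < α := by
    rw [hα_def, lt_div_iff₀ h2ρ]; linarith
  have hαpos : 0 < α - 1 := by linarith
  have hsum_pos : 0 < ∑ x, P x ^ α * Q x ^ (1 - α) :=
    Finset.sum_pos (fun x _ => mul_pos (Real.rpow_pos_of_pos (hP x) _)
      (Real.rpow_pos_of_pos (hQ x) _)) Finset.univ_nonempty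
  have hsum : ∑ x, P x ^ α * Q x ^ (1 - α) ≤ Real.exp ((α - 1) * (ξ + ρ * α)) := by
    have h := hD α hα1
    have h' : Real.log (∑ x, P x ^ α * Q x ^ (1 - α)) ≤ (α - 1) * (ξ + ρ * α) := by
      have h2 := mul_le_mul_of_nonneg_left h hαpos.le
      rw [← mul_assoc, mul_one_div, div_self (ne_of_gt hαpos), one_mul] at h2
      exact h2
    exact (Real.log_le_iff_le_exp hsum_pos).mp h'
  have hpt : ∀ x, P x ≤ Real.exp ε * Q x +
      Real.exp (-(α - 1) * ε) * (P x ^ α * Q x ^ (1 - α)) := by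
    intro x
    rcases le_or_gt (P x) (Real.exp ε * Q x) with h | h
    · have hpos : 0 < Real.exp (-(α - 1) * ε) * (P x ^ α * Q x ^ (1 - α)) := by
        have := Real.rpow_pos_of_pos (hP x) α
        have := Real.rpow_pos_of_pos (hQ x) (1 - α)
        positivity
      linarith
    · obtain ⟨lp, hlp⟩ : ∃ lp, P x = Real.exp lp := ⟨_, (Real.exp_log (hP x)).symm⟩
      obtain ⟨lq, hlq⟩ : ∃ lq, Q x = Real.exp lq := ⟨_, (Real.exp_log (hQ x)).symm⟩
      have hq : 0 < Real.exp ε * Q x := mul_pos (Real.exp_pos ε) (hQ x)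
      have hgap : 0 < lp - lq - ε := by
        have hlog := Real.log_lt_log hq h
        rw [Real.log_mul (Real.exp_ne_zero ε) (ne_of_gt (hQ x)), Real.log_exp,
          hlp, hlq, Real.log_exp, Real.log_exp] at hlog
        linarith
      have key : P x ≤ Real.exp (-(α - 1) * ε) * (P x ^ α * Q x ^ (1 - α)) := by
        rw [hlp, hlq, ← Real.exp_mul, ← Real.exp_mul, ← Real.exp_add, ← Real.exp_add]
        apply Real.exp_le_exp.mpr
        nlinarith [mul_pos hαpos hgap]
      have hq' : 0 ≤ Real.exp ε * Q x := hq.le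
      linarith
  calc ∑ x ∈ S, P x
      ≤ ∑ x ∈ S, (Real.exp ε * Q x + Real.exp (-(α - 1) * ε) * (P x ^ α * Q x ^ (1 - α))) :=
        Finset.sum_le_sum fun x _ => hpt x
    _ = Real.exp ε * ∑ x ∈ S, Q x +
        Real.exp (-(α - 1) * ε) * ∑ x ∈ S, P x ^ α * Q x ^ (1 - α) := by
        rw [Finset.sum_add_distrib, Finset.mul_sum, Finset.mul_sum]
    _ ≤ Real.exp ε * ∑ x ∈ S, Q x +
        Real.exp (-(α - 1) * ε) * ∑ x, P x ^ α * Q x ^ (1 - α) := by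
        gcongr
        · intro x _ _
          have := Real.rpow_pos_of_pos (hP x) α
          have := Real.rpow_pos_of_pos (hQ x) (1 - α)
          positivity
        · exact Finset.subset_univ S
    _ ≤ Real.exp ε * ∑ x ∈ S, Q x +
        Real.exp (-(α - 1) * ε) * Real.exp ((α - 1) * (ξ + ρ * α)) := by
        gcongr
    _ = Real.exp ε * ∑ x ∈ S, Q x + Real.exp (-(ε - ξ - ρ) ^ 2 / (4 * ρ)) := by
        rw [← Real.exp_add]
        congr 1
        rw [hα_def]
        field_simp
        ring
end

section
/- Let P and Q be probability distributions on finite sets Ω × Θ (product space), with marginals P', Q' on Ω and conditionals P'_x, Q'_x on Θ for each x ∈ Ω, all probabilities positive. Then for every α > 1, D_α(P‖Q) ≤ D_α(P'‖Q') + max_{x∈Ω} D_α(P'_x‖Q'_x). -/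
/-!
Factor the joint Rényi sum over the first coordinate:
`P(x,y)^α Q(x,y)^(1-α) = P'(x)^α Q'(x)^(1-α) · P'_x(y)^α Q'_x(y)^(1-α)`, so it equals
`∑ₓ aₓ sₓ` with `∑ₓ aₓ` the marginal Rényi sum and `sₓ` the conditional ones. Bounding
`∑ₓ aₓ sₓ ≤ (∑ₓ aₓ) maxₓ sₓ` and applying the increasing map `t ↦ log t / (α - 1)` gives the claim.
-/

open Finset Real

lemma sum_rpow_mul_rpow_eq_mul_sum_div {ι : Type*} (s : Finset ι) {p q : ι → ℝ}
    (hp : ∀ i ∈ s, 0 ≤ p i) (hq : ∀ i ∈ s, 0 ≤ q i)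
    (hps : 0 < ∑ i ∈ s, p i) (hqs : 0 < ∑ i ∈ s, q i) (α : ℝ) :
    ∑ i ∈ s, p i ^ α * q i ^ (1 - α) =
      (∑ i ∈ s, p i) ^ α * (∑ i ∈ s, q i) ^ (1 - α) *
        ∑ i ∈ s, (p i / ∑ j ∈ s, p j) ^ α * (q i / ∑ j ∈ s, q j) ^ (1 - α) := by
  rw [mul_sum]
  refine sum_congr rfl fun i hi => ?_
  rw [div_rpow (hp i hi) hps.le, div_rpow (hq i hi) hqs.le]
  have := rpow_pos_of_pos hps α
  have := rpow_pos_of_pos hqs (1 - α)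
  field_simp

lemma log_sum_mul_le_log_sum_add_sup' {ι : Type*} (s : Finset ι) (hs : s.Nonempty)
    {a b : ι → ℝ} (ha : ∀ i ∈ s, 0 < a i) (hb : ∀ i ∈ s, 0 < b i) {c : ℝ} (hc : 0 ≤ c) :
    c * log (∑ i ∈ s, a i * b i) ≤
      c * log (∑ i ∈ s, a i) + s.sup' hs (fun i => c * log (b i)) := by
  obtain ⟨k, hk, hk_max⟩ := s.exists_max_image b hs
  have hsum_le : ∑ i ∈ s, a i * b i ≤ (∑ i ∈ s, a i) * b k := by
    rw [sum_mul]
    exact sum_le_sum fun i hi => mul_le_mul_of_nonneg_left (hk_max i hi) (ha i hi).le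
  have hlog : log (∑ i ∈ s, a i * b i) ≤ log (∑ i ∈ s, a i) + log (b k) := by
    rw [← log_mul (sum_pos ha hs).ne' (hb k hk).ne']
    exact log_le_log (sum_pos (fun i hi => mul_pos (ha i hi) (hb i hi)) hs) hsum_le
  calc c * log (∑ i ∈ s, a i * b i) ≤ c * log (∑ i ∈ s, a i) + c * log (b k) := by
        rw [← mul_add]; exact mul_le_mul_of_nonneg_left hlog hc
    _ ≤ _ := add_le_add_right (le_sup' (fun i => c * log (b i)) hk) _

theorem renyi_composition_general {Ω Θ : Type*} [Fintype Ω] [Fintype Θ] [Nonempty Ω]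
    (P Q : Ω → Θ → ℝ)
    (hP : ∀ x y, 0 < P x y) (hQ : ∀ x y, 0 < Q x y)
    (α : ℝ) (hα : 1 < α) :
    (1 / (α - 1)) * Real.log (∑ x, ∑ y, P x y ^ α * Q x y ^ (1 - α)) ≤
      (1 / (α - 1)) * Real.log (∑ x, (∑ y, P x y) ^ α * (∑ y, Q x y) ^ (1 - α)) +
      Finset.univ.sup' Finset.univ_nonempty (fun x =>
        (1 / (α - 1)) * Real.log (∑ y,
          (P x y / ∑ y', P x y') ^ α * (Q x y / ∑ y', Q x y') ^ (1 - α))) := by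
  rcases isEmpty_or_nonempty Θ with _ | _
  · -- every sum is empty, and `log 0 = 0`
    simp [zero_rpow (by linarith : α ≠ 0)]
  have hPx : ∀ x, 0 < ∑ y, P x y := fun x => sum_pos (fun y _ => hP x y) univ_nonempty
  have hQx : ∀ x, 0 < ∑ y, Q x y := fun x => sum_pos (fun y _ => hQ x y) univ_nonempty
  have hmarginal : ∀ x ∈ univ, 0 < (∑ y, P x y) ^ α * (∑ y, Q x y) ^ (1 - α) := fun x _ =>
    mul_pos (rpow_pos_of_pos (hPx x) _) (rpow_pos_of_pos (hQx x) _)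
  have hconditional : ∀ x ∈ univ,
      0 < ∑ y, (P x y / ∑ y', P x y') ^ α * (Q x y / ∑ y', Q x y') ^ (1 - α) := fun x _ =>
    sum_pos (fun y _ => mul_pos (rpow_pos_of_pos (div_pos (hP x y) (hPx x)) _)
      (rpow_pos_of_pos (div_pos (hQ x y) (hQx x)) _)) univ_nonempty
  rw [sum_congr rfl fun x _ => sum_rpow_mul_rpow_eq_mul_sum_div univ
    (fun y _ => (hP x y).le) (fun y _ => (hQ x y).le) (hPx x) (hQx x) α]
  exact log_sum_mul_le_log_sum_add_sup' univ univ_nonempty hmarginal hconditional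
    (one_div_nonneg.2 (by linarith))

theorem renyi_composition {Ω Θ : Type*} [Fintype Ω] [Fintype Θ] [Nonempty Ω]
    (P Q : Ω → Θ → ℝ)
    (hP : ∀ x y, 0 < P x y) (hQ : ∀ x y, 0 < Q x y)
    (hPsum : ∑ x, ∑ y, P x y = 1) (hQsum : ∑ x, ∑ y, Q x y = 1)
    (α : ℝ) (hα : 1 < α) :
    (1 / (α - 1)) * Real.log (∑ x, ∑ y, P x y ^ α * Q x y ^ (1 - α)) ≤
      (1 / (α - 1)) * Real.log (∑ x, (∑ y, P x y) ^ α * (∑ y, Q x y) ^ (1 - α)) +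
      Finset.univ.sup' Finset.univ_nonempty (fun x =>
        (1 / (α - 1)) * Real.log (∑ y,
          (P x y / ∑ y', P x y') ^ α * (Q x y / ∑ y', Q x y') ^ (1 - α))) :=
  renyi_composition_general P Q hP hQ α hα
end

section
/- Let P and Q be probability distributions on a finite set Ω with all probabilities positive, and let f : Ω → ℝ. Then |E_{x∼P}[f(x)] − E_{x∼Q}[f(x)]| ≤ √(E_{x∼Q}[f(x)²]) · √(exp(D₂(P‖Q)) − 1), where D₂(P‖Q) = log Σ_x P(x)²/Q(x). -/
theorem renyi_pinsker_order_two {Ω : Type*} [Fintype Ω] (P Q : Ω → ℝ)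
    (hP : ∀ x, 0 < P x) (hQ : ∀ x, 0 < Q x)
    (hPsum : ∑ x, P x = 1) (hQsum : ∑ x, Q x = 1)
    (f : Ω → ℝ) :
    |∑ x, P x * f x - ∑ x, Q x * f x| ≤
      Real.sqrt (∑ x, Q x * f x ^ 2) *
      Real.sqrt (Real.exp (Real.log (∑ x, P x ^ 2 / Q x)) - 1) := by
  have hne : Nonempty Ω := by
    by_contra h
    rw [not_nonempty_iff] at h
    simp at hPsum
  have hDpos : 0 < ∑ x, P x ^ 2 / Q x :=
    Finset.sum_pos (fun x _ => div_pos (pow_pos (hP x) 2) (hQ x)) Finset.univ_nonempty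
  rw [Real.exp_log hDpos]
  set a : Ω → ℝ := fun x => Real.sqrt (Q x) * f x with ha
  set b : Ω → ℝ := fun x => Real.sqrt (Q x) * (P x / Q x - 1) with hb
  have hab : ∑ x, a x * b x = ∑ x, P x * f x - ∑ x, Q x * f x := by
    rw [← Finset.sum_sub_distrib]
    apply Finset.sum_congr rfl
    intro x _
    have hq := (hQ x).ne'
    have : Real.sqrt (Q x) * Real.sqrt (Q x) = Q x := Real.mul_self_sqrt (hQ x).le
    simp only [ha, hb]
    rw [show Real.sqrt (Q x) * f x * (Real.sqrt (Q x) * (P x / Q x - 1))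
        = Real.sqrt (Q x) * Real.sqrt (Q x) * (f x * (P x / Q x - 1)) by ring, this]
    field_simp
  have ha2 : ∑ x, (a x) ^ 2 = ∑ x, Q x * f x ^ 2 := by
    apply Finset.sum_congr rfl
    intro x _
    rw [ha]
    rw [mul_pow, Real.sq_sqrt (hQ x).le]
  have hb2 : ∑ x, (b x) ^ 2 = (∑ x, P x ^ 2 / Q x) - 1 := by
    have : ∀ x ∈ Finset.univ, (b x) ^ 2 = P x ^ 2 / Q x - 2 * P x + Q x := by
      intro x _
      rw [hb]
      have hq := (hQ x).ne'
      rw [mul_pow, Real.sq_sqrt (hQ x).le]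
      field_simp
      ring
    rw [Finset.sum_congr rfl this]
    rw [Finset.sum_add_distrib, Finset.sum_sub_distrib, ← Finset.mul_sum, hPsum, hQsum]
    ring
  have key : (∑ x, a x * b x) ^ 2 ≤ (∑ x, (a x)^2) * (∑ x, (b x)^2) :=
    Finset.sum_mul_sq_le_sq_mul_sq Finset.univ a b
  rw [hab, ha2, hb2] at key
  calc |∑ x, P x * f x - ∑ x, Q x * f x|
      = Real.sqrt ((∑ x, P x * f x - ∑ x, Q x * f x) ^ 2) := (Real.sqrt_sq_eq_abs _).symm
    _ ≤ Real.sqrt ((∑ x, Q x * f x ^ 2) * ((∑ x, P x ^ 2 / Q x) - 1)) := Real.sqrt_le_sqrt key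
    _ = _ := Real.sqrt_mul (Finset.sum_nonneg fun x _ => mul_nonneg (hQ x).le (sq_nonneg _)) _
end

section
/- Let X be a real-valued random variable (bounded, or such that all relevant expectations exist). Then E[exp(X − E[X])] ≤ (1/2)E[exp(2X)] + (1/2)E[exp(−2X)]. -/
/-!
Pointwise, AM–GM gives `exp (X - m) ≤ exp (2X) / 2 + exp (-2m) / 2` with `m = 𝔼[X]`, and by Jensen's
inequality `exp (-2m) ≤ 𝔼[exp (-2X)]`.
-/

open MeasureTheory

theorem Real.exp_add_le_half_exp_two_mul_add_half_exp_two_mul (x y : ℝ) :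
    Real.exp (x + y) ≤ 1 / 2 * Real.exp (2 * x) + 1 / 2 * Real.exp (2 * y) := by
  have hx : Real.exp (2 * x) = Real.exp x ^ 2 := by rw [← Real.exp_nat_mul]; norm_num
  have hy : Real.exp (2 * y) = Real.exp y ^ 2 := by rw [← Real.exp_nat_mul]; norm_num
  rw [Real.exp_add, hx, hy]
  nlinarith [sq_nonneg (Real.exp x - Real.exp y)]

section

variable {Ω : Type*} [MeasurableSpace Ω] {μ : Measure Ω} [IsProbabilityMeasure μ]

theorem exp_integral_le_integral_exp {f : Ω → ℝ} (hf : Integrable f μ)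
    (hexp : Integrable (fun ω => Real.exp (f ω)) μ) :
    Real.exp (∫ ω, f ω ∂μ) ≤ ∫ ω, Real.exp (f ω) ∂μ :=
  convexOn_exp.map_integral_le Real.continuous_exp.continuousOn isClosed_univ
    (Filter.Eventually.of_forall fun _ => Set.mem_univ _) hf hexp

theorem integral_exp_sub_le {X : Ω → ℝ} (hX : Integrable (fun ω => Real.exp (2 * X ω)) μ)
    (c : ℝ) :
    ∫ ω, Real.exp (X ω - c) ∂μ ≤
      1 / 2 * ∫ ω, Real.exp (2 * X ω) ∂μ + 1 / 2 * Real.exp (-2 * c) := by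
  have hbound : Integrable (fun ω => 1 / 2 * Real.exp (2 * X ω) + 1 / 2 * Real.exp (-2 * c)) μ :=
    (hX.const_mul _).add (integrable_const _)
  calc ∫ ω, Real.exp (X ω - c) ∂μ
      ≤ ∫ ω, (1 / 2 * Real.exp (2 * X ω) + 1 / 2 * Real.exp (-2 * c)) ∂μ := by
        refine integral_mono_of_nonneg (Filter.Eventually.of_forall fun _ => (Real.exp_pos _).le)
          hbound (Filter.Eventually.of_forall fun ω => ?_)
        have := Real.exp_add_le_half_exp_two_mul_add_half_exp_two_mul (X ω) (-c)
        rwa [← sub_eq_add_neg, mul_neg, ← neg_mul] at this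
    _ = 1 / 2 * ∫ ω, Real.exp (2 * X ω) ∂μ + 1 / 2 * Real.exp (-2 * c) := by
        rw [integral_add (hX.const_mul _) (integrable_const _), integral_const_mul,
          integral_const, probReal_univ, one_smul]

end

theorem exp_centered_le {Ω : Type*} [MeasurableSpace Ω] (μ : Measure Ω)
    [IsProbabilityMeasure μ] (X : Ω → ℝ)
    (hX : Integrable X μ)
    (h2 : Integrable (fun ω => Real.exp (2 * X ω)) μ)
    (h2' : Integrable (fun ω => Real.exp (-2 * X ω)) μ) :
    ∫ ω, Real.exp (X ω - ∫ ω', X ω' ∂μ) ∂μ ≤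
      (1 / 2) * ∫ ω, Real.exp (2 * X ω) ∂μ + (1 / 2) * ∫ ω, Real.exp (-2 * X ω) ∂μ := by
  have hJensen : Real.exp (-2 * ∫ ω, X ω ∂μ) ≤ ∫ ω, Real.exp (-2 * X ω) ∂μ := by
    simpa only [integral_const_mul] using exp_integral_le_integral_exp (hX.const_mul (-2)) h2'
  calc ∫ ω, Real.exp (X ω - ∫ ω', X ω' ∂μ) ∂μ
      ≤ 1 / 2 * ∫ ω, Real.exp (2 * X ω) ∂μ + 1 / 2 * Real.exp (-2 * ∫ ω, X ω ∂μ) :=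
        integral_exp_sub_le h2 _
    _ ≤ _ := by gcongr
end

section
/- Let Z be a real random variable satisfying Pr[Z > ξ + ρ^{1/4} + t] ≤ (2/ρ^{1/4})·e^{−t²/ρ} for all t ≥ 0, where ξ ≥ 0 and 0 < ρ ≤ 1. Then for all α > 1, E[e^{(α−1)Z}] ≤ exp((α−1)(ξ + (1+2√π)ρ^{1/4} − ρ/4 + (ρ/4)α)). -/
/-!
With `c = α - 1`, `r = ρ^{1/4}` and `Y = (Z - ξ - r)⁺` we have `e^{cZ} ≤ e^{c(ξ + r)} e^{cY}`, and
the layer-cake formula gives `E[e^{cY}] = 1 + ∫_0^∞ c e^{ct} Pr[Y > t] dt`. After inserting the tail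
bound, completing the square `e^{-t²/ρ} e^{ct} = e^{c²ρ/4} e^{-(t - cρ/2)²/ρ}` turns the integrand
into a shifted Gaussian, so the integral is at most `(2c/r) e^{c²ρ/4} √(πρ) = 2√π c r e^{c²ρ/4}`.
Finally `1 + x e^k ≤ e^{x + k}` for `k ≥ 0`.
-/

open MeasureTheory Set Real

theorem integral_mul_exp_mul (c y : ℝ) :
    ∫ t in (0 : ℝ)..y, c * exp (c * t) = exp (c * y) - 1 := by
  rw [intervalIntegral.integral_eq_sub_of_hasDerivAt (f := fun t => exp (c * t))
    (fun t _ => by simpa [mul_comm] using ((hasDerivAt_id t).const_mul c).exp)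
    ((by fun_prop : Continuous fun t => c * exp (c * t)).intervalIntegrable _ _)]
  simp

theorem exp_neg_sq_div_mul_exp_mul {ρ : ℝ} (hρ : ρ ≠ 0) (c t : ℝ) :
    exp (-t ^ 2 / ρ) * exp (c * t) = exp (c ^ 2 * ρ / 4) * exp (-(t - c * ρ / 2) ^ 2 / ρ) := by
  rw [← exp_add, ← exp_add]
  congr 1
  field_simp
  ring

theorem lintegral_ofReal_exp_neg_sub_sq_div {ρ : ℝ} (hρ : 0 < ρ) (a : ℝ) :
    ∫⁻ t, ENNReal.ofReal (exp (-(t - a) ^ 2 / ρ)) = ENNReal.ofReal (√(π * ρ)) := by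
  have hgauss : Integrable fun t : ℝ => exp (-ρ⁻¹ * t ^ 2) :=
    integrable_exp_neg_mul_sq (inv_pos.2 hρ)
  simp_rw [neg_div, div_eq_inv_mul, ← neg_mul]
  rw [← ofReal_integral_eq_lintegral_ofReal (hgauss.comp_sub_right a)
    (Filter.Eventually.of_forall fun t => (exp_pos _).le),
    integral_sub_right_eq_self (fun t => exp (-ρ⁻¹ * t ^ 2)) a, integral_gaussian, div_inv_eq_mul]

theorem one_add_mul_exp_le_exp_add (x : ℝ) {k : ℝ} (hk : 0 ≤ k) :
    1 + x * exp k ≤ exp (x + k) := by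
  rw [exp_add]
  nlinarith [add_one_le_exp x, one_le_exp hk]

section

variable {Ω : Type*} [MeasurableSpace Ω]

theorem lintegral_ofReal_exp_mul_eq (μ : Measure Ω) {Y : Ω → ℝ} (hY : AEMeasurable Y μ)
    (hY0 : 0 ≤ᵐ[μ] Y) {c : ℝ} (hc : 0 ≤ c) :
    ∫⁻ ω, ENNReal.ofReal (exp (c * Y ω)) ∂μ =
      μ univ + ∫⁻ t in Ioi 0, μ {ω | t < Y ω} * ENNReal.ofReal (c * exp (c * t)) := by
  have hsplit : ∀ y, 0 ≤ y → ENNReal.ofReal (exp (c * y)) =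
      1 + ENNReal.ofReal (∫ t in (0 : ℝ)..y, c * exp (c * t)) := fun y hy => by
    rw [integral_mul_exp_mul, ← ENNReal.ofReal_one, ← ENNReal.ofReal_add zero_le_one
      (by linarith [one_le_exp (mul_nonneg hc hy)]), add_sub_cancel]
  rw [lintegral_congr_ae (hY0.mono fun ω hω => hsplit _ hω), lintegral_add_left measurable_const,
    lintegral_one, lintegral_comp_eq_lintegral_meas_lt_mul μ hY0 hY
      (fun t _ => (by fun_prop : Continuous fun t => c * exp (c * t)).intervalIntegrable _ _)
      (Filter.Eventually.of_forall fun t => by positivity)]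

theorem lintegral_ofReal_exp_mul_le_of_gaussian_tail {μ : Measure Ω} [IsProbabilityMeasure μ]
    {Y : Ω → ℝ} (hY : AEMeasurable Y μ) (hY0 : 0 ≤ᵐ[μ] Y) {A ρ c : ℝ} (hA : 0 ≤ A) (hρ : 0 < ρ)
    (hc : 0 ≤ c) (htail : ∀ t > 0, μ {ω | t < Y ω} ≤ ENNReal.ofReal (A * exp (-t ^ 2 / ρ))) :
    ∫⁻ ω, ENNReal.ofReal (exp (c * Y ω)) ∂μ ≤
      ENNReal.ofReal (exp (A * c * √(π * ρ) + c ^ 2 * ρ / 4)) := by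
  set k := c ^ 2 * ρ / 4
  set K := ENNReal.ofReal (A * c * exp k)
  have hpoint : ∀ t ∈ Ioi (0 : ℝ), μ {ω | t < Y ω} * ENNReal.ofReal (c * exp (c * t)) ≤
      K * ENNReal.ofReal (exp (-(t - c * ρ / 2) ^ 2 / ρ)) := fun t ht =>
    calc _ ≤ ENNReal.ofReal (A * exp (-t ^ 2 / ρ)) * ENNReal.ofReal (c * exp (c * t)) := by
          gcongr; exact htail t ht
      _ = _ := by
          rw [← ENNReal.ofReal_mul (by positivity), ← ENNReal.ofReal_mul (by positivity)]
          congr 1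
          linear_combination (A * c) * exp_neg_sq_div_mul_exp_mul hρ.ne' c t
  calc ∫⁻ ω, ENNReal.ofReal (exp (c * Y ω)) ∂μ
      = 1 + ∫⁻ t in Ioi 0, μ {ω | t < Y ω} * ENNReal.ofReal (c * exp (c * t)) := by
        rw [lintegral_ofReal_exp_mul_eq μ hY hY0 hc, measure_univ]
    _ ≤ 1 + ∫⁻ t in Ioi 0, K * ENNReal.ofReal (exp (-(t - c * ρ / 2) ^ 2 / ρ)) := by
        gcongr 1 + ?_
        exact setLIntegral_mono (by fun_prop) hpoint
    _ ≤ 1 + ∫⁻ t, K * ENNReal.ofReal (exp (-(t - c * ρ / 2) ^ 2 / ρ)) := by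
        gcongr
        exact Measure.restrict_le_self
    _ = ENNReal.ofReal (1 + A * c * √(π * ρ) * exp k) := by
        rw [lintegral_const_mul' _ _ ENNReal.ofReal_ne_top, lintegral_ofReal_exp_neg_sub_sq_div hρ,
          ← ENNReal.ofReal_mul (by positivity), ← ENNReal.ofReal_one,
          ← ENNReal.ofReal_add zero_le_one (by positivity)]
        ring_nf
    _ ≤ _ := ENNReal.ofReal_le_ofReal (one_add_mul_exp_le_exp_add _ (by positivity))

theorem lintegral_ofReal_exp_mul_le_exp_mul_mul_max_sub
    (μ : Measure Ω) (Z : Ω → ℝ) {c : ℝ} (hc : 0 ≤ c) (m : ℝ) :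
    ∫⁻ ω, ENNReal.ofReal (exp (c * Z ω)) ∂μ ≤
      ENNReal.ofReal (exp (c * m)) * ∫⁻ ω, ENNReal.ofReal (exp (c * max (Z ω - m) 0)) ∂μ := by
  rw [← lintegral_const_mul' _ _ ENNReal.ofReal_ne_top]
  refine lintegral_mono fun ω => ?_
  rw [← ENNReal.ofReal_mul (exp_pos _).le, ← exp_add]
  gcongr
  nlinarith [le_max_left (Z ω - m) 0]

end

theorem mgf_of_tail_bound_general {Ω : Type*} [MeasurableSpace Ω] (μ : Measure Ω)
    [IsProbabilityMeasure μ] (Z : Ω → ℝ) (hZ : Measurable Z)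
    (ξ ρ : ℝ) (hρ0 : 0 < ρ)
    (h : ∀ t : ℝ, 0 ≤ t →
      (μ {ω | ξ + ρ ^ ((1 : ℝ) / 4) + t < Z ω}).toReal ≤
        (2 / ρ ^ ((1 : ℝ) / 4)) * Real.exp (-t ^ 2 / ρ))
    (α : ℝ) (hα : 1 < α) :
    ∫ ω, Real.exp ((α - 1) * Z ω) ∂μ ≤
      Real.exp ((α - 1) *
        (ξ + (1 + 2 * Real.sqrt Real.pi) * ρ ^ ((1 : ℝ) / 4) - ρ / 4 + (ρ / 4) * α)) := by
  set c := α - 1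
  have hc : 0 ≤ c := sub_nonneg.2 hα.le
  set r := ρ ^ ((1 : ℝ) / 4) with hr_def
  have hr : 0 < r := rpow_pos_of_pos hρ0 _
  have hsqrt : √(π * ρ) = √π * r ^ 2 := by
    rw [sqrt_mul pi_nonneg, sqrt_eq_rpow ρ, hr_def, ← rpow_natCast, ← rpow_mul hρ0.le]
    norm_num
  have htail : ∀ t > 0, μ {ω | t < max (Z ω - (ξ + r)) 0} ≤
      ENNReal.ofReal (2 / r * exp (-t ^ 2 / ρ)) := by
    intro t ht
    have hset : {ω | t < max (Z ω - (ξ + r)) 0} = {ω | ξ + r + t < Z ω} := by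
      ext ω
      simp only [mem_ofPred_eq, lt_max_iff, lt_sub_iff_add_lt', ht.not_gt, or_false]
    rw [hset, ENNReal.le_ofReal_iff_toReal_le (measure_ne_top μ _) (by positivity)]
    exact h t ht.le
  have hY := lintegral_ofReal_exp_mul_le_of_gaussian_tail
    (by fun_prop : Measurable fun ω => max (Z ω - (ξ + r)) 0).aemeasurable
    (ae_of_all _ fun ω => le_max_right _ _) (by positivity) hρ0 hc htail
  rw [integral_eq_lintegral_of_nonneg_ae (ae_of_all _ fun ω => (exp_pos _).le)
    (by fun_prop : Measurable fun ω => exp (c * Z ω)).aestronglyMeasurable]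
  refine ENNReal.toReal_le_of_le_ofReal (exp_pos _).le ?_
  calc _ ≤ _ := lintegral_ofReal_exp_mul_le_exp_mul_mul_max_sub μ Z hc (ξ + r)
    _ ≤ ENNReal.ofReal (exp (c * (ξ + r))) *
          ENNReal.ofReal (exp (2 / r * c * √(π * ρ) + c ^ 2 * ρ / 4)) := by gcongr
    _ = _ := by
      rw [← ENNReal.ofReal_mul (exp_pos _).le, ← exp_add, hsqrt]
      congr 2
      field_simp
      ring

theorem mgf_of_tail_bound {Ω : Type*} [MeasurableSpace Ω] (μ : Measure Ω)
    [IsProbabilityMeasure μ] (Z : Ω → ℝ) (hZ : Measurable Z)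
    (ξ ρ : ℝ) (hξ : 0 ≤ ξ) (hρ0 : 0 < ρ) (hρ1 : ρ ≤ 1)
    (h : ∀ t : ℝ, 0 ≤ t →
      (μ {ω | ξ + ρ ^ ((1 : ℝ) / 4) + t < Z ω}).toReal ≤
        (2 / ρ ^ ((1 : ℝ) / 4)) * Real.exp (-t ^ 2 / ρ))
    (α : ℝ) (hα : 1 < α) :
    ∫ ω, Real.exp ((α - 1) * Z ω) ∂μ ≤
      Real.exp ((α - 1) *
        (ξ + (1 + 2 * Real.sqrt Real.pi) * ρ ^ ((1 : ℝ) / 4) - ρ / 4 + (ρ / 4) * α)) :=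
  mgf_of_tail_bound_general μ Z hZ ξ ρ hρ0 h α hα
end
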